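/- Let E be a real or complex Banach space, h₀ > 0, and let g : ℝ → E be the sum of a power series centered at 0 with radius of convergence strictly greater than h₀, with ℓ-th Taylor coefficient g^{(ℓ)}(0)/ℓ!. Define φ_{jℓ} = (1/ℓ!)∫_0^1 P_j(c) c^ℓ dc. Then: (i) φ_{jℓ} = 0 for all ℓ < j; (ii) |φ_{jℓ}| ≤ √(2j+1)/ℓ! for all ℓ; and (iii) for every h ∈ [0, h₀], the series Σ_{ℓ=j}^∞ φ_{jℓ} h^ℓ g^{(ℓ)}(0) converges absolutely in E and ∫_0^1 P_j(c) g(ch) dc = Σ_{ℓ=j}^∞ φ_{jℓ} h^ℓ g^{(ℓ)}(0). -/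

import Mathlib

open Polynomial MeasureTheory Set
open scoped Nat Interval

/-- The shifted and scaled Legendre polynomial on `[0,1]`, via Rodrigues' formula:
`P_j(x) = (√(2j+1)/j!) (d/dx)^j [(x² - x)^j]`. -/
noncomputable def legendreP (j : ℕ) : ℝ → ℝ :=
  fun x => (Real.sqrt (2 * (j : ℝ) + 1) / (Nat.factorial j : ℝ)) *
    iteratedDeriv j (fun y : ℝ => (y ^ 2 - y) ^ j) x

/-- The coefficients `φ_{jℓ} = (1/ℓ!) ∫_0^1 P_j(c) c^ℓ dc`. -/
noncomputable def phiCoeff (j ℓ : ℕ) : ℝ :=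
  (1 / (Nat.factorial ℓ : ℝ)) * ∫ c in (0:ℝ)..1, legendreP j c * c ^ ℓ

/-!
Integrating by parts `j` times in Rodrigues' formula moves every derivative onto `c ^ ℓ`; the
boundary terms vanish because `(c² - c) ^ j` has zeros of order `j` at `0` and `1`. Hence the
moment `∫₀¹ P_j(c) c^ℓ dc` is `0` for `ℓ < j`, and for `ℓ ≥ j` it is a Beta integral equal to
`√(2j+1) · ℓ(ℓ-1)⋯(ℓ-j+1) · ℓ! / (ℓ+j+1)!`, which is at most `√(2j+1)`. The expansion is the
termwise integration of the power series of `c ↦ P_j(c) g(ch)`, whose `ℓ`-th term is dominated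
on `[0,1]` by `M ‖p_ℓ‖ h^ℓ` with `M = sup_{[0,1]} |P_j|`.
-/

namespace Polynomial

theorem iteratedDeriv_eval (Q : ℝ[X]) (k : ℕ) :
    iteratedDeriv k (fun x => Q.eval x) = fun x => (derivative^[k] Q).eval x := by
  induction k with
  | zero => simp
  | succ k ih =>
    rw [iteratedDeriv_succ, ih, Function.iterate_succ_apply']
    funext x
    exact Polynomial.deriv _

theorem isRoot_iterate_derivative_of_pow_dvd {R : Type*} [CommRing R] {p : R[X]} {t : R}
    {n k : ℕ} (h : (X - C t) ^ n ∣ p) (hk : k < n) : (derivative^[k] p).IsRoot t :=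
  dvd_iff_isRoot.mp <| (dvd_pow_self _ <| Nat.sub_ne_zero_of_lt hk).trans
    (pow_sub_dvd_iterate_derivative_of_pow_dvd k h)

theorem integral_derivative_eval_mul_eval {A : ℝ[X]} {a b : ℝ} (ha : A.IsRoot a)
    (hb : A.IsRoot b) (B : ℝ[X]) :
    ∫ x in a..b, (derivative A).eval x * B.eval x =
      -∫ x in a..b, A.eval x * (derivative B).eval x := by
  have h := intervalIntegral.integral_deriv_mul_eq_sub (fun x _ => A.hasDerivAt x)
    (fun x _ => B.hasDerivAt x) ((derivative A).continuous.intervalIntegrable a b)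
    ((derivative B).continuous.intervalIntegrable a b)
  rw [intervalIntegral.integral_add (Continuous.intervalIntegrable (by fun_prop) a b)
    (Continuous.intervalIntegrable (by fun_prop) a b), ha.eq_zero, hb.eq_zero] at h
  linear_combination h

theorem integral_iterate_derivative_eval_mul_eval {A : ℝ[X]} {a b : ℝ} {n : ℕ}
    (hA : ∀ k < n, (derivative^[k] A).IsRoot a ∧ (derivative^[k] A).IsRoot b) (B : ℝ[X]) :
    ∫ x in a..b, (derivative^[n] A).eval x * B.eval x =
      (-1) ^ n * ∫ x in a..b, A.eval x * (derivative^[n] B).eval x := by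
  induction n generalizing B with
  | zero => simp
  | succ n ih =>
    obtain ⟨ha, hb⟩ := hA n n.lt_succ_self
    rw [Function.iterate_succ_apply', integral_derivative_eval_mul_eval ha hb,
      ih (fun k hk => hA k (hk.trans n.lt_succ_self)), ← Function.iterate_succ_apply, pow_succ]
    ring

end Polynomial

theorem integral_pow_mul_one_sub_pow (a b : ℕ) :
    ∫ x in (0:ℝ)..1, x ^ a * (1 - x) ^ b = (a ! * b ! / (a + b + 1)! : ℝ) := by
  have hre (n : ℕ) : 0 < ((n : ℂ) + 1).re := by
    simp only [Complex.add_re, Complex.natCast_re, Complex.one_re]; positivity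
  have h := Complex.betaIntegral_eq_Gamma_mul_div (a + 1) (b + 1) (hre a) (hre b)
  rw [show (a + 1 : ℂ) + (b + 1) = ((a + b + 1 : ℕ) : ℂ) + 1 by push_cast; ring,
    Complex.Gamma_nat_eq_factorial, Complex.Gamma_nat_eq_factorial,
    Complex.Gamma_nat_eq_factorial] at h
  simp only [Complex.betaIntegral, add_sub_cancel_right, Complex.cpow_natCast] at h
  apply Complex.ofReal_injective
  rw [← intervalIntegral.integral_ofReal]
  push_cast
  exact h

theorem Nat.descFactorial_mul_factorial_le_factorial (n k : ℕ) :
    n.descFactorial k * n ! ≤ (n + k + 1)! :=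
  calc n.descFactorial k * n ! ≤ (n + 1) ^ k * n ! :=
        Nat.mul_le_mul_right _ ((n.descFactorial_le_pow k).trans (Nat.pow_le_pow_left n.le_succ k))
    _ ≤ (n + k)! := by rw [mul_comm]; exact Nat.factorial_mul_pow_le_factorial
    _ ≤ (n + k + 1)! := Nat.factorial_le (Nat.le_succ _)

theorem HasFPowerSeriesOnBall.iteratedDeriv_eq_factorial_smul_coeff {𝕜 F : Type*}
    [NontriviallyNormedField 𝕜] [NormedAddCommGroup F] [NormedSpace 𝕜 F] [CompleteSpace F]
    {f : 𝕜 → F} {p : FormalMultilinearSeries 𝕜 𝕜 F} {x : 𝕜} {r : ENNReal}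
    (hf : HasFPowerSeriesOnBall f p x r) (n : ℕ) : iteratedDeriv n f x = n ! • p.coeff n := by
  have h := hf.factorial_smul 1 n
  rw [FormalMultilinearSeries.apply_eq_pow_smul_coeff, one_pow, one_smul] at h
  rw [iteratedDeriv_eq_iteratedFDeriv, ← h]

theorem HasFPowerSeriesOnBall.hasSum_smul_comp_mul {E : Type*} [NormedAddCommGroup E]
    [NormedSpace ℝ E] {g : ℝ → E} {p : FormalMultilinearSeries ℝ ℝ E} {r : ENNReal}
    (hg : HasFPowerSeriesOnBall g p 0 r) {c h : ℝ} (hc : ‖c‖ ≤ 1) (hh : ‖h‖ₑ < r) (a : ℝ) :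
    HasSum (fun ℓ => (a * c ^ ℓ * h ^ ℓ) • p.coeff ℓ) (a • g (c * h)) := by
  have hmem : c * h ∈ Metric.eball (0:ℝ) r := by
    rw [Metric.mem_eball, edist_zero_right, enorm_mul]
    refine lt_of_le_of_lt (mul_le_of_le_one_left' ?_) hh
    rw [← ofReal_norm, ← ENNReal.ofReal_one]
    exact ENNReal.ofReal_le_ofReal hc
  simpa only [zero_add, FormalMultilinearSeries.apply_eq_pow_smul_coeff, smul_smul, mul_pow,
    ← mul_assoc] using (hg.hasSum hmem).const_smul a

theorem HasFPowerSeriesOnBall.hasSum_integral_smul_comp_mul {E : Type*} [NormedAddCommGroup E]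
    [NormedSpace ℝ E] [CompleteSpace E] {g : ℝ → E} {p : FormalMultilinearSeries ℝ ℝ E}
    {r : ENNReal} (hg : HasFPowerSeriesOnBall g p 0 r) {w : ℝ → ℝ} (hw : Continuous w) {h : ℝ}
    (hh : ‖h‖ₑ < r) :
    Summable (fun ℓ => ‖((∫ c in (0:ℝ)..1, w c * c ^ ℓ) * h ^ ℓ) • p.coeff ℓ‖) ∧
      HasSum (fun ℓ => ((∫ c in (0:ℝ)..1, w c * c ^ ℓ) * h ^ ℓ) • p.coeff ℓ)
        (∫ c in (0:ℝ)..1, w c • g (c * h)) := by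
  obtain ⟨M, hM⟩ := (isCompact_uIcc (a := (0:ℝ)) (b := 1)).exists_bound_of_continuousOn
    hw.continuousOn
  have hp : Summable fun ℓ => ‖p ℓ‖ * ‖h‖ ^ ℓ :=
    p.summable_norm_mul_pow (r := ‖h‖₊) (hh.trans_le hg.r_le)
  set F : ℕ → ℝ → E := fun ℓ c => (w c * c ^ ℓ * h ^ ℓ) • p.coeff ℓ
  have hF : ∀ ℓ, ∫ c in (0:ℝ)..1, F ℓ c = ((∫ c in (0:ℝ)..1, w c * c ^ ℓ) * h ^ ℓ) • p.coeff ℓ :=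
    fun ℓ => by
      simp only [F, intervalIntegral.integral_smul_const, intervalIntegral.integral_mul_const]
  have hc_le_one : ∀ c ∈ Ι (0:ℝ) 1, ‖c‖ ≤ 1 := fun c hc => by
    rw [uIoc_of_le zero_le_one] at hc
    exact abs_le.2 ⟨by linarith [hc.1], hc.2⟩
  have hbound : ∀ ℓ, ∀ c ∈ Ι (0:ℝ) 1, ‖F ℓ c‖ ≤ M * (‖p ℓ‖ * ‖h‖ ^ ℓ) := by
    intro ℓ c hc
    have hwc : ‖w c‖ ≤ M := hM c (uIoc_subset_uIcc hc)
    have hM0 : 0 ≤ M := (norm_nonneg _).trans hwc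
    calc ‖F ℓ c‖ = ‖w c‖ * ‖c‖ ^ ℓ * ‖h‖ ^ ℓ * ‖p ℓ‖ := by
          simp only [F, norm_smul, norm_mul, norm_pow,
            FormalMultilinearSeries.norm_apply_eq_norm_coef]
      _ ≤ M * 1 * ‖h‖ ^ ℓ * ‖p ℓ‖ := by
          gcongr
          exact pow_le_one₀ (norm_nonneg c) (hc_le_one c hc)
      _ = M * (‖p ℓ‖ * ‖h‖ ^ ℓ) := by ring
  have hlim : ∀ c ∈ Ι (0:ℝ) 1, HasSum (F · c) (w c • g (c * h)) := fun c hc =>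
    hg.hasSum_smul_comp_mul (hc_le_one c hc) hh (w c)
  simp only [← hF]
  refine ⟨Summable.of_nonneg_of_le (fun _ => norm_nonneg _) (fun ℓ => ?_) (hp.mul_left M),
    intervalIntegral.hasSum_integral_of_dominated_convergence (fun ℓ _ => M * (‖p ℓ‖ * ‖h‖ ^ ℓ))
      (fun ℓ => ?_) (fun ℓ => ae_of_all _ (hbound ℓ)) (ae_of_all _ fun _ _ => hp.mul_left M)
      intervalIntegrable_const (ae_of_all _ hlim)⟩
  · simpa using intervalIntegral.norm_integral_le_of_norm_le_const (hbound ℓ)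
  · exact (by fun_prop : Continuous (F ℓ)).aestronglyMeasurable

noncomputable def rodriguesPoly (j : ℕ) : ℝ[X] := (X ^ 2 - X) ^ j

theorem legendreP_eq_eval (j : ℕ) (x : ℝ) :
    legendreP j x = √(2 * j + 1) / j ! * (derivative^[j] (rodriguesPoly j)).eval x := by
  have hQ : (fun y : ℝ => (y ^ 2 - y) ^ j) = fun y => (rodriguesPoly j).eval y := by
    funext y; simp [rodriguesPoly]
  rw [legendreP, hQ, iteratedDeriv_eval]

theorem continuous_legendreP (j : ℕ) : Continuous (legendreP j) :=
  (continuous_const.mul (Polynomial.continuous _)).congr fun x => (legendreP_eq_eval j x).symm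

theorem isRoot_iterate_derivative_rodriguesPoly {j k : ℕ} (hk : k < j) :
    (derivative^[k] (rodriguesPoly j)).IsRoot 0 ∧
      (derivative^[k] (rodriguesPoly j)).IsRoot 1 := by
  have hfac : rodriguesPoly j = (X - C 0) ^ j * (X - C 1) ^ j := by
    rw [rodriguesPoly, ← mul_pow]; congr 1; simp; ring
  exact ⟨isRoot_iterate_derivative_of_pow_dvd (hfac ▸ dvd_mul_right _ _) hk,
    isRoot_iterate_derivative_of_pow_dvd (hfac ▸ dvd_mul_left _ _) hk⟩

theorem integral_legendreP_mul_pow (j ℓ : ℕ) :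
    ∫ x in (0:ℝ)..1, legendreP j x * x ^ ℓ =
      √(2 * j + 1) / j ! * (-1) ^ j * ℓ.descFactorial j *
        ∫ x in (0:ℝ)..1, (x ^ 2 - x) ^ j * x ^ (ℓ - j) := by
  have h := integral_iterate_derivative_eval_mul_eval (a := 0) (b := 1) (n := j)
    (fun k hk => isRoot_iterate_derivative_rodriguesPoly hk) (X ^ ℓ)
  simp only [iterate_derivative_X_pow_eq_natCast_mul, eval_mul, eval_pow, eval_X,
    eval_natCast] at h
  simp only [legendreP_eq_eval, mul_assoc, intervalIntegral.integral_const_mul, h]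
  simp only [rodriguesPoly, eval_pow, eval_sub, eval_X, mul_left_comm _ (ℓ.descFactorial j : ℝ),
    intervalIntegral.integral_const_mul]

theorem integral_legendreP_mul_pow_of_lt {j ℓ : ℕ} (h : ℓ < j) :
    ∫ x in (0:ℝ)..1, legendreP j x * x ^ ℓ = 0 := by
  simp [integral_legendreP_mul_pow, Nat.descFactorial_eq_zero_iff_lt.mpr h]

theorem integral_legendreP_mul_pow_of_le {j ℓ : ℕ} (h : j ≤ ℓ) :
    ∫ x in (0:ℝ)..1, legendreP j x * x ^ ℓ =
      √(2 * j + 1) * ℓ.descFactorial j * ℓ ! / (ℓ + j + 1)! := by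
  have hbeta : ∫ x in (0:ℝ)..1, (x ^ 2 - x) ^ j * x ^ (ℓ - j) =
      (-1) ^ j * (ℓ ! * j ! / (ℓ + j + 1)!) := by
    rw [← integral_pow_mul_one_sub_pow, ← intervalIntegral.integral_const_mul]
    congr 1 with x
    rw [show x ^ 2 - x = -1 * (x * (1 - x)) by ring, mul_pow, mul_pow, ← pow_sub_mul_pow x h]
    ring
  have hsign : ((-1 : ℝ) ^ j) ^ 2 = 1 := by rw [← pow_mul, pow_mul', neg_one_sq, one_pow]
  rw [integral_legendreP_mul_pow, hbeta]
  field_simp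
  rw [hsign, one_mul]

theorem abs_integral_legendreP_mul_pow_le (j ℓ : ℕ) :
    |∫ x in (0:ℝ)..1, legendreP j x * x ^ ℓ| ≤ √(2 * j + 1) := by
  rcases lt_or_ge ℓ j with h | h
  · rw [integral_legendreP_mul_pow_of_lt h, abs_zero]
    positivity
  · rw [integral_legendreP_mul_pow_of_le h, abs_of_nonneg (by positivity), mul_assoc,
      mul_div_assoc]
    refine mul_le_of_le_one_right (Real.sqrt_nonneg _) ((div_le_one (by positivity)).2 ?_)
    exact_mod_cast Nat.descFactorial_mul_factorial_le_factorial ℓ j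

theorem phiCoeff_eq_zero_of_lt {j ℓ : ℕ} (h : ℓ < j) : phiCoeff j ℓ = 0 := by
  rw [phiCoeff, integral_legendreP_mul_pow_of_lt h, mul_zero]

theorem abs_phiCoeff_le (j ℓ : ℕ) : |phiCoeff j ℓ| ≤ √(2 * j + 1) / ℓ ! := by
  rw [phiCoeff, abs_mul, one_div, abs_inv, Nat.abs_cast, inv_mul_eq_div]
  gcongr
  exact abs_integral_legendreP_mul_pow_le j ℓ

theorem integral_legendreP_smul_taylor_expansion_general
    {E : Type*} [NormedAddCommGroup E] [NormedSpace ℝ E] [CompleteSpace E]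
    (h₀ : ℝ) (g : ℝ → E) (p : FormalMultilinearSeries ℝ ℝ E) (r : ENNReal)
    (hr : ENNReal.ofReal h₀ < r) (hg : HasFPowerSeriesOnBall g p 0 r) (j : ℕ) :
    (∀ ℓ : ℕ, ℓ < j → phiCoeff j ℓ = 0) ∧
    (∀ ℓ : ℕ, |phiCoeff j ℓ| ≤ Real.sqrt (2 * (j : ℝ) + 1) / (Nat.factorial ℓ : ℝ)) ∧
    (∀ h ∈ Set.Icc (0:ℝ) h₀,
      Summable (fun ℓ : ℕ =>
        ‖(phiCoeff j (j + ℓ) * h ^ (j + ℓ)) • iteratedDeriv (j + ℓ) g 0‖) ∧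
      HasSum (fun ℓ : ℕ => (phiCoeff j (j + ℓ) * h ^ (j + ℓ)) • iteratedDeriv (j + ℓ) g 0)
        (∫ c in (0:ℝ)..1, legendreP j c • g (c * h))) := by
  refine ⟨fun ℓ => phiCoeff_eq_zero_of_lt, abs_phiCoeff_le j, fun h ⟨hh0, hhh₀⟩ => ?_⟩
  have hterm : ∀ ℓ, (phiCoeff j ℓ * h ^ ℓ) • iteratedDeriv ℓ g 0 =
      ((∫ c in (0:ℝ)..1, legendreP j c * c ^ ℓ) * h ^ ℓ) • p.coeff ℓ := fun ℓ => by
    rw [hg.iteratedDeriv_eq_factorial_smul_coeff, ← Nat.cast_smul_eq_nsmul ℝ, smul_smul,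
      phiCoeff]
    congr 1
    field_simp
  have hh : ‖h‖ₑ < r := by
    rw [Real.enorm_of_nonneg hh0]
    exact (ENNReal.ofReal_le_ofReal hhh₀).trans_lt hr
  obtain ⟨hsum, hhas⟩ := hg.hasSum_integral_smul_comp_mul (continuous_legendreP j) hh
  simp only [← hterm] at hsum hhas
  have hhead : ∑ ℓ ∈ Finset.range j, (phiCoeff j ℓ * h ^ ℓ) • iteratedDeriv ℓ g 0 = 0 :=
    Finset.sum_eq_zero fun ℓ hℓ => by
      rw [phiCoeff_eq_zero_of_lt (Finset.mem_range.1 hℓ), zero_mul, zero_smul]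
  refine ⟨((summable_nat_add_iff j).2 hsum).congr fun ℓ => by rw [add_comm], ?_⟩
  convert (hasSum_nat_add_iff' j).2 hhas using 1
  · exact funext fun ℓ => by rw [add_comm]
  · rw [hhead, sub_zero]

/-- Expansion of `∫_0^1 P_j(c) g(ch) dc` along the Taylor coefficients of `g`:
(i) `φ_{jℓ} = 0` for `ℓ < j`; (ii) `|φ_{jℓ}| ≤ √(2j+1)/ℓ!`; (iii) for `h ∈ [0, h₀]` the
series `Σ_{ℓ=j}^∞ φ_{jℓ} h^ℓ g^{(ℓ)}(0)` converges absolutely and equals the integral. -/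
theorem integral_legendreP_smul_taylor_expansion
    {E : Type*} [NormedAddCommGroup E] [NormedSpace ℝ E] [CompleteSpace E]
    (h₀ : ℝ) (hh₀ : 0 < h₀) (g : ℝ → E) (p : FormalMultilinearSeries ℝ ℝ E) (r : ENNReal)
    (hr : ENNReal.ofReal h₀ < r) (hg : HasFPowerSeriesOnBall g p 0 r) (j : ℕ) :
    (∀ ℓ : ℕ, ℓ < j → phiCoeff j ℓ = 0) ∧
    (∀ ℓ : ℕ, |phiCoeff j ℓ| ≤ Real.sqrt (2 * (j : ℝ) + 1) / (Nat.factorial ℓ : ℝ)) ∧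
    (∀ h ∈ Set.Icc (0:ℝ) h₀,
      Summable (fun ℓ : ℕ =>
        ‖(phiCoeff j (j + ℓ) * h ^ (j + ℓ)) • iteratedDeriv (j + ℓ) g 0‖) ∧
      HasSum (fun ℓ : ℕ => (phiCoeff j (j + ℓ) * h ^ (j + ℓ)) • iteratedDeriv (j + ℓ) g 0)
        (∫ c in (0:ℝ)..1, legendreP j c • g (c * h))) :=
  integral_legendreP_smul_taylor_expansion_general h₀ g p r hr hg j
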